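/- For every natural number M ≥ 1 and every nonzero complex number z, (1/2)(z + 1/z)^{4M} − (1/2)(z − 1/z)^{4M} = 4(z² + 1/z²) ∑_{k=0}^{M−1} 2^{4k} ((M−k)/(2k+1)) C(M+k, 2k) (z² − 1/z²)^{2(M−1−k)}. -/

import Mathlib

/-!
Put `u = (z + 1/z)²` and `v = (z - 1/z)²`, so that `u - v = 4`, `u v = (z² - 1/z²)²` and
`u² - v² = 8 (z² + 1/z²)`. Since `(M - k)/(2k + 1) · C(M+k, 2k) = C(M+k, 2k+1)`, the identity becomes
`(u² - v²) · ∑_{k<m} C(m+k, 2k+1) (u-v)^{2k} (uv)^{m-1-k} = u^{2m} - v^{2m}`, which holds in any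
commutative ring. Induct on `m` jointly with the companion identity
`(u + v) · ∑_{k≤m} C(m+k, 2k) (u-v)^{2k} (uv)^{m-k} = u^{2m+1} + v^{2m+1}`: by Pascal's rule the two
sums satisfy a coupled first-order recurrence, and so do the right-hand sides.
-/

open Finset

section BinomSums

variable {R : Type*} [CommRing R]

def binomOddSum (t r : R) (m : ℕ) : R :=
  ∑ k ∈ range m, ((m + k).choose (2 * k + 1) : R) * t ^ k * r ^ (m - 1 - k)

def binomEvenSum (t r : R) (m : ℕ) : R :=
  ∑ k ∈ range (m + 1), ((m + k).choose (2 * k) : R) * t ^ k * r ^ (m - k)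

variable (t r : R) (m : ℕ)

theorem binomOddSum_succ :
    binomOddSum t r (m + 1) = binomEvenSum t r m + r * binomOddSum t r m := by
  have pascal : ∀ k, ((m + 1 + k).choose (2 * k + 1) : R)
      = (m + k).choose (2 * k) + (m + k).choose (2 * k + 1) := fun k => by
    rw [add_right_comm, Nat.choose_succ_succ', Nat.cast_add]
  have shift : r * binomOddSum t r m
      = ∑ k ∈ range (m + 1), ((m + k).choose (2 * k + 1) : R) * t ^ k * r ^ (m - k) := by
    rw [binomOddSum, mul_sum, sum_range_succ, Nat.choose_eq_zero_of_lt (by omega),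
      Nat.cast_zero, zero_mul, zero_mul, add_zero]
    refine sum_congr rfl fun k hk => ?_
    rw [show m - k = m - 1 - k + 1 by have := mem_range.mp hk; omega, pow_succ]
    ring
  rw [shift, binomOddSum, binomEvenSum, ← sum_add_distrib]
  refine sum_congr rfl fun k _ => ?_
  rw [pascal, Nat.add_sub_cancel]
  ring

theorem binomEvenSum_succ :
    binomEvenSum t r (m + 1) = t * binomOddSum t r (m + 1) + r * binomEvenSum t r m := by
  have pascal : ∀ k, ((m + 1 + (k + 1)).choose (2 * (k + 1)) : R)
      = (m + 1 + k).choose (2 * k + 1) + (m + k + 1).choose (2 * (k + 1)) := fun k => by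
    rw [show m + 1 + (k + 1) = m + 1 + k + 1 by ring, show 2 * (k + 1) = 2 * k + 1 + 1 by ring,
      Nat.choose_succ_succ', Nat.cast_add, add_right_comm m 1 k]
  have shift : r * binomEvenSum t r m = r ^ (m + 1)
      + ∑ k ∈ range (m + 1), ((m + k + 1).choose (2 * (k + 1)) : R) * t ^ (k + 1) * r ^ (m - k) := by
    rw [binomEvenSum, mul_sum, sum_range_succ', sum_range_succ _ m,
      Nat.choose_eq_zero_of_lt (by omega : m + m + 1 < 2 * (m + 1))]
    simp only [Nat.cast_zero, zero_mul, add_zero, Nat.mul_zero, Nat.choose_zero_right,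
      Nat.cast_one, pow_zero, one_mul, mul_one, Nat.sub_zero, ← pow_succ']
    rw [add_comm]
    congr 1
    refine sum_congr rfl fun k hk => ?_
    rw [show m - k = m - (k + 1) + 1 by have := mem_range.mp hk; omega, pow_succ, ← add_assoc]
    ring
  rw [shift, binomEvenSum, sum_range_succ', binomOddSum, mul_sum]
  simp only [pascal, Nat.mul_zero, add_zero, Nat.choose_zero_right, Nat.cast_one, pow_zero,
    one_mul, Nat.sub_zero, Nat.add_sub_cancel, Nat.add_sub_add_right]
  rw [add_comm (r ^ (m + 1)), ← add_assoc, ← sum_add_distrib]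
  congr 1
  refine sum_congr rfl fun k _ => ?_
  ring

theorem sq_sub_sq_mul_binomOddSum (u v : R) :
    (u ^ 2 - v ^ 2) * binomOddSum ((u - v) ^ 2) (u * v) m = u ^ (2 * m) - v ^ (2 * m) := by
  suffices (u ^ 2 - v ^ 2) * binomOddSum ((u - v) ^ 2) (u * v) m = u ^ (2 * m) - v ^ (2 * m) ∧
      (u + v) * binomEvenSum ((u - v) ^ 2) (u * v) m = u ^ (2 * m + 1) + v ^ (2 * m + 1) from
    this.1
  induction m with
  | zero => simp [binomOddSum, binomEvenSum]
  | succ m ih =>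
    obtain ⟨hodd, heven⟩ := ih
    have hodd' : (u ^ 2 - v ^ 2) * binomOddSum ((u - v) ^ 2) (u * v) (m + 1)
        = u ^ (2 * (m + 1)) - v ^ (2 * (m + 1)) := by
      rw [binomOddSum_succ]
      linear_combination (u - v) * heven + u * v * hodd
    refine ⟨hodd', ?_⟩
    rw [binomEvenSum_succ]
    linear_combination (u - v) * hodd' + u * v * heven

end BinomSums

theorem cast_choose_succ_eq_div_mul {K : Type*} [Field K] [CharZero K] {n j : ℕ} (h : j ≤ n) :
    (n.choose (j + 1) : K) = ((n : K) - j) / (j + 1) * n.choose j := by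
  rw [div_mul_eq_mul_div, eq_div_iff (Nat.cast_add_one_ne_zero j), ← Nat.cast_sub h,
    mul_comm ((n - j : ℕ) : K)]
  exact_mod_cast Nat.choose_succ_right_eq n j


theorem stmt_7 (M : ℕ) (z : ℂ) (hz : z ≠ 0) :
    (1 / 2) * (z + 1 / z) ^ (4 * M) - (1 / 2) * (z - 1 / z) ^ (4 * M)
    = 4 * (z ^ 2 + 1 / z ^ 2) * ∑ k ∈ Finset.range M,
        2 ^ (4 * k) * (((M : ℂ) - k) / (2 * k + 1)) * ((M + k).choose (2 * k)) *
          (z ^ 2 - 1 / z ^ 2) ^ (2 * (M - 1 - k)) := by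
  have hsum : ∑ k ∈ range M, 2 ^ (4 * k) * (((M : ℂ) - k) / (2 * k + 1)) *
      ((M + k).choose (2 * k)) * (z ^ 2 - 1 / z ^ 2) ^ (2 * (M - 1 - k))
      = binomOddSum 16 ((z ^ 2 - 1 / z ^ 2) ^ 2) M := by
    refine sum_congr rfl fun k hk => ?_
    rw [cast_choose_succ_eq_div_mul (by have := mem_range.mp hk; omega), pow_mul, pow_mul]
    push_cast
    ring
  have key := sq_sub_sq_mul_binomOddSum M ((z + 1 / z) ^ 2) ((z - 1 / z) ^ 2)
  have h_sub : ((z + 1 / z) ^ 2 - (z - 1 / z) ^ 2) ^ 2 = 16 := by field_simp; ring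
  have h_mul : (z + 1 / z) ^ 2 * (z - 1 / z) ^ 2 = (z ^ 2 - 1 / z ^ 2) ^ 2 := by ring
  have h_sq_sub : ((z + 1 / z) ^ 2) ^ 2 - ((z - 1 / z) ^ 2) ^ 2 = 8 * (z ^ 2 + 1 / z ^ 2) := by
    field_simp; ring
  rw [h_sub, h_mul, h_sq_sub, ← pow_mul, ← pow_mul] at key
  rw [hsum]
  linear_combination -key / 2
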